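/- Assume (Hg) and the cut-off setup, fix ρ > 0, and let Φ₀ : ℝ → ℝⁿ be bounded and C¹ with ∂ξΦ₀ ∈ L² and g(Φ₀) ∈ L². For θ ∈ {−1, −1/2, 1} define ν_σ^{(θ)}(u, ψ) = κ_σ(u,ψ)^{θ} − 1. Then there exist constants K_ν > 0 and K > 0, not depending on Φ, such that for every Φ with Φ − Φ₀ ∈ H¹, ‖Φ − Φ₀‖_{H¹} ≤ 1, every σ ∈ [0,1], every v ∈ H¹, ψ ∈ H¹: |ν_σ^{(θ)}(Φ+v, ψ)| ≤ σ²K_ν; and for all v_A, v_B ∈ H¹, ψ_A, ψ_B ∈ H¹: |ν_σ^{(θ)}(Φ+v_A, ψ_A) − ν_σ^{(θ)}(Φ+v_B, ψ_B)| ≤ Kσ²‖v_A−v_B‖_{L²}‖ψ_A‖_{H¹} + Kσ²(1 + ‖v_B‖_{L²})‖ψ_A−ψ_B‖_{H¹}. -/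

import Mathlib

open MeasureTheory

noncomputable section

abbrev En (n : ℕ) : Type := EuclideanSpace ℝ (Fin n)

/-- membership in `L²(ℝ;ℝⁿ)` -/
def memL2 {n : ℕ} (f : ℝ → En n) : Prop := MemLp f 2 volume

/-- the `L²` norm -/
def l2norm {n : ℕ} (f : ℝ → En n) : ℝ := (eLpNorm f 2 volume).toReal

/-- the `L²` inner product -/
def l2inner {n : ℕ} (f g : ℝ → En n) : ℝ := ∫ ξ, (inner ℝ (f ξ) (g ξ) : ℝ)

/-- `f` is locally absolutely continuous with derivative `f'` -/
def hasWeakDeriv {n : ℕ} (f f' : ℝ → En n) : Prop :=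
  LocallyIntegrable f' volume ∧ ∀ x y : ℝ, f y - f x = ∫ t in x..y, f' t

/-- membership in `H¹`, with the derivative recorded explicitly -/
def memH1 {n : ℕ} (f f' : ℝ → En n) : Prop :=
  hasWeakDeriv f f' ∧ memL2 f ∧ memL2 f'

/-- the `H¹` norm -/
def h1norm {n : ℕ} (f f' : ℝ → En n) : ℝ :=
  Real.sqrt ((l2norm f)^2 + (l2norm f')^2)

/-- membership in `H²`, with both derivatives recorded explicitly -/
def memH2 {n : ℕ} (f f' f'' : ℝ → En n) : Prop :=
  memH1 f f' ∧ memH1 f' f''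

/-- the `H²` norm -/
def h2norm {n : ℕ} (f f' f'' : ℝ → En n) : ℝ :=
  Real.sqrt ((l2norm f)^2 + (l2norm f')^2 + (l2norm f'')^2)

/-- the function `b(u,ψ)` built from the cut-offs; `u` is the profile and `du` its derivative -/
def bfun {n : ℕ} (χlow χhigh : ℝ → ℝ) (g : En n → En n)
    (u du : ℝ → En n) (ψ : ℝ → En n) : ℝ :=
  -(χlow (l2inner du ψ))⁻¹ * χhigh (l2inner (fun ξ => g (u ξ)) ψ)

/-- the function `κ_σ = 1 + σ²b²/(2ρ)` -/
def kappa (ρ σ b : ℝ) : ℝ := 1 + σ^2 * b^2 / (2*ρ)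


section Auxiliary
open MeasureTheory Set
open scoped RealInnerProductSpace


variable {n : ℕ} {f f' g g' : ℝ → En n}

lemma hasWeakDeriv.continuous (hf : hasWeakDeriv f f') : Continuous f := by
  have hrepr : f = fun y => f 0 + ∫ t in (0:ℝ)..y, f' t := by
    funext y
    exact (sub_eq_iff_eq_add'.mp (hf.2 0 y))
  rw [hrepr]
  refine continuous_const.add (intervalIntegral.continuous_primitive (fun a b => ?_) 0)
  rw [intervalIntegrable_iff]
  exact (hf.1.integrableOn_isCompact isCompact_uIcc).mono_set Set.Ioc_subset_Icc_self

lemma prodFTC (hf : memH1 f f') (hg : memH1 g g') {x y : ℝ} (hxy : x ≤ y) :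
    (⟪f y, g y⟫ - ⟪f x, g x⟫ : ℝ)
      = ∫ t in Set.Ioc x y, ((⟪f' t, g t⟫ : ℝ) + ⟪f t, g' t⟫) := by
  have hfc : Continuous f := hf.1.continuous
  have hgc : Continuous g := hg.1.continuous
  set I : Set ℝ := Set.Ioc x y with hI
  have hImeas : MeasurableSet I := measurableSet_Ioc
  have hf'I : IntegrableOn f' I volume :=
    (hf.1.1.integrableOn_isCompact isCompact_Icc).mono_set Ioc_subset_Icc_self
  have hg'I : IntegrableOn g' I volume :=
    (hg.1.1.integrableOn_isCompact isCompact_Icc).mono_set Ioc_subset_Icc_self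
  have hFf : ∫ t in I, f' t = f y - f x := by
    rw [← intervalIntegral.integral_of_le hxy]; exact (hf.1.2 x y).symm
  have hGg : ∫ t in I, g' t = g y - g x := by
    rw [← intervalIntegral.integral_of_le hxy]; exact (hg.1.2 x y).symm
  -- bounds for continuous functions on Icc
  obtain ⟨Cg, hCg⟩ := isCompact_Icc.exists_bound_of_continuousOn
    (hgc.continuousOn : ContinuousOn g (Icc x y))
  obtain ⟨Cf, hCf⟩ := isCompact_Icc.exists_bound_of_continuousOn
    (hfc.continuousOn : ContinuousOn f (Icc x y))
  -- integrability of the pointwise inner products on I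
  have hint1 : IntegrableOn (fun t => (⟪f' t, g t⟫ : ℝ)) I volume := by
    refine (hf'I.norm.mul_const Cg).mono'
      (hf'I.aestronglyMeasurable.inner (hgc.aestronglyMeasurable.restrict)) ?_
    refine (ae_restrict_iff' hImeas).mpr (ae_of_all _ fun t ht => ?_)
    calc ‖(⟪f' t, g t⟫ : ℝ)‖ ≤ ‖f' t‖ * ‖g t‖ := norm_inner_le_norm _ _
      _ ≤ ‖f' t‖ * Cg := by
          exact mul_le_mul_of_nonneg_left (hCg t (Ioc_subset_Icc_self ht)) (norm_nonneg _)
  have hint2 : IntegrableOn (fun t => (⟪f t, g' t⟫ : ℝ)) I volume := by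
    refine (hg'I.norm.const_mul Cf).mono'
      ((hfc.aestronglyMeasurable.restrict).inner hg'I.aestronglyMeasurable) ?_
    refine (ae_restrict_iff' hImeas).mpr (ae_of_all _ fun t ht => ?_)
    calc ‖(⟪f t, g' t⟫ : ℝ)‖ ≤ ‖f t‖ * ‖g' t‖ := norm_inner_le_norm _ _
      _ ≤ Cf * ‖g' t‖ := by
          exact mul_le_mul_of_nonneg_right (hCf t (Ioc_subset_Icc_self ht)) (norm_nonneg _)
  have hintc1 : IntegrableOn (fun t => (⟪f' t, g x⟫ : ℝ)) I volume := by
    refine (hf'I.norm.mul_const ‖g x‖).mono'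
      (hf'I.aestronglyMeasurable.inner aestronglyMeasurable_const) ?_
    exact ae_of_all _ fun t => norm_inner_le_norm _ _
  have hintc2 : IntegrableOn (fun t => (⟪f x, g' t⟫ : ℝ)) I volume := by
    refine (hg'I.norm.const_mul ‖f x‖).mono'
      (aestronglyMeasurable_const.inner hg'I.aestronglyMeasurable) ?_
    exact ae_of_all _ fun t => norm_inner_le_norm _ _
  -- constant-side integrals
  have hconst1 : ∫ t in I, (⟪f' t, g x⟫ : ℝ) = ⟪f y - f x, g x⟫ := by
    have : ∫ t in I, (innerSL ℝ (g x)) (f' t) = (innerSL ℝ (g x)) (∫ t in I, f' t) :=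
      ContinuousLinearMap.integral_comp_comm _ hf'I
    simp only [innerSL_apply_apply] at this
    calc ∫ t in I, (⟪f' t, g x⟫ : ℝ) = ∫ t in I, (⟪g x, f' t⟫ : ℝ) := by
          simp_rw [real_inner_comm]
      _ = ⟪g x, f y - f x⟫ := by rw [this, hFf]
      _ = ⟪f y - f x, g x⟫ := real_inner_comm _ _
  have hconst2 : ∫ t in I, (⟪f x, g' t⟫ : ℝ) = ⟪f x, g y - g x⟫ := by
    have : ∫ t in I, (innerSL ℝ (f x)) (g' t) = (innerSL ℝ (f x)) (∫ t in I, g' t) :=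
      ContinuousLinearMap.integral_comp_comm _ hg'I
    simp only [innerSL_apply_apply] at this
    rw [this, hGg]
  -- product measure setup
  set P := (volume.restrict I).prod (volume.restrict I) with hP
  have hfm' : AEStronglyMeasurable (fun p : ℝ × ℝ => f' p.1) P :=
    hf'I.aestronglyMeasurable.comp_quasiMeasurePreserving Measure.quasiMeasurePreserving_fst
  have hgm' : AEStronglyMeasurable (fun p : ℝ × ℝ => g' p.2) P :=
    hg'I.aestronglyMeasurable.comp_quasiMeasurePreserving Measure.quasiMeasurePreserving_snd
  set F1 : ℝ × ℝ → ℝ := fun p => ⟪f' p.1, g' p.2⟫ with hF1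
  have hF1m : AEStronglyMeasurable F1 P := hfm'.inner hgm'
  have hF1i : Integrable F1 P := by
    have hb : Integrable (fun p : ℝ × ℝ => ‖f' p.1‖ * ‖g' p.2‖) P :=
      hf'I.norm.mul_prod hg'I.norm
    exact hb.mono' hF1m (ae_of_all _ fun p => norm_inner_le_norm _ _)
  set S1 : Set (ℝ × ℝ) := {p | p.2 < p.1} with hS1def
  set S2 : Set (ℝ × ℝ) := {p | p.1 ≤ p.2} with hS2def
  have hS1m : MeasurableSet S1 := measurableSet_lt measurable_snd measurable_fst
  have hS2m : MeasurableSet S2 := measurableSet_le measurable_fst measurable_snd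
  have h1i : Integrable (S1.indicator F1) P := hF1i.indicator hS1m
  have h2i : Integrable (S2.indicator F1) P := hF1i.indicator hS2m
  -- T1
  have hT1 : ∫ t in I, (⟪f' t, g t - g x⟫ : ℝ) = ∫ p, S1.indicator F1 p ∂P := by
    rw [hP, MeasureTheory.integral_prod _ h1i]
    refine setIntegral_congr_fun hImeas fun t ht => ?_
    have hsub : Ioo x t ⊆ I := fun s hs => ⟨hs.1, hs.2.le.trans ht.2⟩
    have hgt : g t - g x = ∫ s in Ioc x t, g' s := by
      rw [← intervalIntegral.integral_of_le ht.1.le]; exact hg.1.2 x t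
    have hg'Ioo : IntegrableOn g' (Ioo x t) volume := hg'I.mono_set hsub
    have step : (⟪f' t, g t - g x⟫ : ℝ) = ∫ s in Ioo x t, (⟪f' t, g' s⟫ : ℝ) := by
      have h2 := ContinuousLinearMap.integral_comp_comm (innerSL ℝ (f' t)) hg'Ioo
      simp only [innerSL_apply_apply] at h2
      rw [hgt, integral_Ioc_eq_integral_Ioo, ← h2]
    have hind : ∫ s in I, (Ioo x t).indicator (fun s => (⟪f' t, g' s⟫ : ℝ)) s
        = ∫ s in Ioo x t, (⟪f' t, g' s⟫ : ℝ) := by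
      rw [setIntegral_indicator measurableSet_Ioo, inter_eq_self_of_subset_right hsub]
    rw [step, ← hind]
    refine setIntegral_congr_fun hImeas fun s hs => ?_
    by_cases hst : s < t
    · have h1 : s ∈ Ioo x t := ⟨hs.1, hst⟩
      have h2 : ((t, s) : ℝ × ℝ) ∈ S1 := hst
      simp only [Set.indicator_of_mem h1, Set.indicator_of_mem h2, hF1]
    · have h1 : s ∉ Ioo x t := fun hc => hst hc.2
      have h2 : ((t, s) : ℝ × ℝ) ∉ S1 := hst
      simp only [Set.indicator_of_notMem h1, Set.indicator_of_notMem h2]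
  -- T2
  have hT2 : ∫ t in I, (⟪f t - f x, g' t⟫ : ℝ) = ∫ p, S2.indicator F1 p ∂P := by
    have hswap : ∫ p, S2.indicator F1 (Prod.swap p) ∂P = ∫ p, S2.indicator F1 p ∂P :=
      MeasureTheory.integral_prod_swap _
    have h2i' : Integrable (fun p : ℝ × ℝ => S2.indicator F1 p.swap) P := by
      exact h2i.swap
    rw [← hswap, hP, MeasureTheory.integral_prod _ h2i']
    refine setIntegral_congr_fun hImeas fun t ht => ?_
    have hsub : Ioc x t ⊆ I := fun s hs => ⟨hs.1, hs.2.trans ht.2⟩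
    have hft : f t - f x = ∫ s in Ioc x t, f' s := by
      rw [← intervalIntegral.integral_of_le ht.1.le]; exact hf.1.2 x t
    have hf'Ioc : IntegrableOn f' (Ioc x t) volume := hf'I.mono_set hsub
    have step : (⟪f t - f x, g' t⟫ : ℝ) = ∫ s in Ioc x t, (⟪f' s, g' t⟫ : ℝ) := by
      have h2 := ContinuousLinearMap.integral_comp_comm (innerSL ℝ (g' t)) hf'Ioc
      simp only [innerSL_apply_apply] at h2
      calc (⟪f t - f x, g' t⟫ : ℝ) = ⟪g' t, f t - f x⟫ := real_inner_comm _ _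
        _ = ∫ s in Ioc x t, (⟪g' t, f' s⟫ : ℝ) := by rw [hft, ← h2]
        _ = ∫ s in Ioc x t, (⟪f' s, g' t⟫ : ℝ) := by simp_rw [real_inner_comm]
    have hind : ∫ s in I, (Ioc x t).indicator (fun s => (⟪f' s, g' t⟫ : ℝ)) s
        = ∫ s in Ioc x t, (⟪f' s, g' t⟫ : ℝ) := by
      rw [setIntegral_indicator measurableSet_Ioc, inter_eq_self_of_subset_right hsub]
    rw [step, ← hind]
    refine setIntegral_congr_fun hImeas fun s hs => ?_
    by_cases hst : s ≤ t
    · have h1 : s ∈ Ioc x t := ⟨hs.1, hst⟩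
      have h2 : ((s, t) : ℝ × ℝ) ∈ S2 := hst
      rw [Set.indicator_of_mem h1, Prod.swap_prod_mk, Set.indicator_of_mem h2]
    · have h1 : s ∉ Ioc x t := fun hc => hst hc.2
      have h2 : ((s, t) : ℝ × ℝ) ∉ S2 := hst
      rw [Set.indicator_of_notMem h1, Prod.swap_prod_mk, Set.indicator_of_notMem h2]
  -- sum of the two indicator integrals
  have hsum : (∫ p, S1.indicator F1 p ∂P) + (∫ p, S2.indicator F1 p ∂P)
      = (⟪f y - f x, g y - g x⟫ : ℝ) := by
    rw [← integral_add h1i h2i]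
    have hpt : ∀ p : ℝ × ℝ, S1.indicator F1 p + S2.indicator F1 p = F1 p := by
      intro p
      by_cases hp : p.2 < p.1
      · have h2 : p ∉ S2 := not_le.mpr hp
        simp [Set.indicator_of_mem (show p ∈ S1 from hp), Set.indicator_of_notMem h2]
      · have h2 : p ∈ S2 := not_lt.mp hp
        simp [Set.indicator_of_notMem (show p ∉ S1 from hp), Set.indicator_of_mem h2]
    calc ∫ p, (S1.indicator F1 p + S2.indicator F1 p) ∂P = ∫ p, F1 p ∂P := by simp_rw [hpt]
      _ = ∫ t in I, ∫ s in I, F1 (t, s) := by rw [hP, MeasureTheory.integral_prod _ hF1i]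
      _ = ∫ t in I, (⟪f' t, g y - g x⟫ : ℝ) := by
          refine setIntegral_congr_fun hImeas fun t _ => ?_
          have h2 := ContinuousLinearMap.integral_comp_comm (innerSL ℝ (f' t)) hg'I
          simp only [innerSL_apply_apply] at h2
          simp only [hF1]
          rw [h2, hGg]
      _ = (⟪f y - f x, g y - g x⟫ : ℝ) := by
          have h2 := ContinuousLinearMap.integral_comp_comm (innerSL ℝ (g y - g x)) hf'I
          simp only [innerSL_apply_apply] at h2
          calc ∫ t in I, (⟪f' t, g y - g x⟫ : ℝ) = ∫ t in I, (⟪g y - g x, f' t⟫ : ℝ) := by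
                simp_rw [real_inner_comm]
            _ = ⟪g y - g x, f y - f x⟫ := by rw [h2, hFf]
            _ = ⟪f y - f x, g y - g x⟫ := real_inner_comm _ _
  -- split integrals
  have e1 : ∫ t in I, (⟪f' t, g t - g x⟫ : ℝ)
      = (∫ t in I, (⟪f' t, g t⟫ : ℝ)) - ∫ t in I, (⟪f' t, g x⟫ : ℝ) := by
    simp_rw [inner_sub_right]
    exact integral_sub hint1 hintc1
  have e2 : ∫ t in I, (⟪f t - f x, g' t⟫ : ℝ)
      = (∫ t in I, (⟪f t, g' t⟫ : ℝ)) - ∫ t in I, (⟪f x, g' t⟫ : ℝ) := by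
    simp_rw [inner_sub_left]
    exact integral_sub hint2 hintc2
  have hmain : (∫ t in I, (⟪f' t, g t⟫ : ℝ)) + (∫ t in I, (⟪f t, g' t⟫ : ℝ))
      = (⟪f y - f x, g y - g x⟫ : ℝ) + ⟪f y - f x, g x⟫ + ⟪f x, g y - g x⟫ := by
    have := hsum
    rw [← hT1, ← hT2, e1, e2, hconst1, hconst2] at this
    linarith
  rw [integral_add hint1 hint2, hmain]
  simp only [inner_sub_left, inner_sub_right]
  ring

lemma tendsto_zero_of_integrable_atTop {h : ℝ → ℝ} (hi : Integrable h volume) {L : ℝ}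
    (hl : Filter.Tendsto h Filter.atTop (nhds L)) : L = 0 := by
  by_contra hL
  have hev : ∀ᶠ t in Filter.atTop, |L| / 2 ≤ ‖h t‖ := by
    filter_upwards [hl (Metric.ball_mem_nhds L (by positivity : (0:ℝ) < |L|/2))] with t ht
    have h1 : |h t - L| < |L| / 2 := by
      simpa [Real.dist_eq] using ht
    have h2 : |L| - |h t| ≤ |L - h t| := abs_sub_abs_le_abs_sub L (h t)
    have h3 : |L - h t| = |h t - L| := abs_sub_comm _ _
    rw [Real.norm_eq_abs]
    linarith
  obtain ⟨a, ha⟩ := Filter.eventually_atTop.mp hev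
  have hconst : IntegrableOn (fun _ : ℝ => |L| / 2) (Ioi a) volume := by
    refine (hi.norm.integrableOn).mono' aestronglyMeasurable_const ?_
    refine (ae_restrict_iff' measurableSet_Ioi).mpr (ae_of_all _ fun t ht => ?_)
    rw [Real.norm_eq_abs, abs_of_nonneg (by positivity : (0:ℝ) ≤ |L|/2)]
    exact ha t ht.le
  rw [integrableOn_const_iff] at hconst
  rcases hconst with hc | hc
  · exact hL (by simpa using hc)
  · simp [Real.volume_Ioi] at hc

lemma tendsto_zero_of_integrable_atBot {h : ℝ → ℝ} (hi : Integrable h volume) {L : ℝ}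
    (hl : Filter.Tendsto h Filter.atBot (nhds L)) : L = 0 := by
  by_contra hL
  have hev : ∀ᶠ t in Filter.atBot, |L| / 2 ≤ ‖h t‖ := by
    filter_upwards [hl (Metric.ball_mem_nhds L (by positivity : (0:ℝ) < |L|/2))] with t ht
    have h1 : |h t - L| < |L| / 2 := by
      simpa [Real.dist_eq] using ht
    have h2 : |L| - |h t| ≤ |L - h t| := abs_sub_abs_le_abs_sub L (h t)
    have h3 : |L - h t| = |h t - L| := abs_sub_comm _ _
    rw [Real.norm_eq_abs]
    linarith
  obtain ⟨a, ha⟩ := Filter.eventually_atBot.mp hev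
  have hconst : IntegrableOn (fun _ : ℝ => |L| / 2) (Iio a) volume := by
    refine (hi.norm.integrableOn).mono' aestronglyMeasurable_const ?_
    refine (ae_restrict_iff' measurableSet_Iio).mpr (ae_of_all _ fun t ht => ?_)
    rw [Real.norm_eq_abs, abs_of_nonneg (by positivity : (0:ℝ) ≤ |L|/2)]
    exact ha t ht.le
  rw [integrableOn_const_iff] at hconst
  rcases hconst with hc | hc
  · exact hL (by simpa using hc)
  · simp [Real.volume_Iio] at hc

lemma memL2.integrable_inner' (hf : memL2 f) (hg : memL2 g) :
    Integrable (fun ξ => (⟪f ξ, g ξ⟫ : ℝ)) volume := by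
  have h := MeasureTheory.L2.integrable_inner (𝕜 := ℝ) (hf.toLp f) (hg.toLp g)
  refine h.congr ?_
  filter_upwards [hf.coeFn_toLp, hg.coeFn_toLp] with ξ h1 h2
  rw [h1, h2]

lemma l2inner_ibp (hf : memH1 f f') (hg : memH1 g g') :
    l2inner f' g = - l2inner f g' := by
  set D : ℝ → ℝ := fun t => (⟪f' t, g t⟫ : ℝ) + ⟪f t, g' t⟫ with hD
  have hD1 : Integrable (fun t => (⟪f' t, g t⟫ : ℝ)) volume :=
    memL2.integrable_inner' hf.2.2 hg.2.1
  have hD2 : Integrable (fun t => (⟪f t, g' t⟫ : ℝ)) volume :=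
    memL2.integrable_inner' hf.2.1 hg.2.2
  have hDi : Integrable D volume := hD1.add hD2
  have hhm : Integrable (fun t => (⟪f t, g t⟫ : ℝ)) volume :=
    memL2.integrable_inner' hf.2.1 hg.2.1
  set h : ℝ → ℝ := fun t => (⟪f t, g t⟫ : ℝ) with hh
  have hrep : ∀ y : ℝ, 0 ≤ y → h y = h 0 + ∫ t in (0:ℝ)..y, D t := by
    intro y hy
    have := prodFTC hf hg hy
    rw [intervalIntegral.integral_of_le hy]
    simp only [hh]
    linarith [this]
  have hrep' : ∀ x : ℝ, x ≤ 0 → h x = h 0 - ∫ t in x..(0:ℝ), D t := by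
    intro x hx
    have := prodFTC hf hg hx
    rw [intervalIntegral.integral_of_le hx]
    simp only [hh]
    linarith [this]
  have htop : Filter.Tendsto h Filter.atTop (nhds (h 0 + ∫ t in Ioi (0:ℝ), D t)) := by
    have h1 : Filter.Tendsto (fun y => ∫ t in (0:ℝ)..y, D t) Filter.atTop
        (nhds (∫ t in Ioi (0:ℝ), D t)) :=
      intervalIntegral_tendsto_integral_Ioi 0 hDi.integrableOn Filter.tendsto_id
    refine (Filter.Tendsto.const_add (h 0) h1).congr' ?_
    filter_upwards [Filter.eventually_ge_atTop (0:ℝ)] with y hy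
    exact (hrep y hy).symm
  have hbot : Filter.Tendsto h Filter.atBot (nhds (h 0 - ∫ t in Iic (0:ℝ), D t)) := by
    have h1 : Filter.Tendsto (fun x => ∫ t in x..(0:ℝ), D t) Filter.atBot
        (nhds (∫ t in Iic (0:ℝ), D t)) :=
      intervalIntegral_tendsto_integral_Iic 0 hDi.integrableOn Filter.tendsto_id
    refine (Filter.Tendsto.const_sub (h 0) h1).congr' ?_
    filter_upwards [Filter.eventually_le_atBot (0:ℝ)] with x hx
    exact (hrep' x hx).symm
  have hLtop : h 0 + ∫ t in Ioi (0:ℝ), D t = 0 := tendsto_zero_of_integrable_atTop hhm htop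
  have hLbot : h 0 - ∫ t in Iic (0:ℝ), D t = 0 := tendsto_zero_of_integrable_atBot hhm hbot
  have hsplit : (∫ t in Iic (0:ℝ), D t) + ∫ t in Ioi (0:ℝ), D t = ∫ t, D t := by
    have h2 := integral_add_compl (measurableSet_Iic (a := (0:ℝ))) hDi
    rwa [compl_Iic] at h2
  have hDzero : ∫ t, D t = 0 := by linarith
  have : l2inner f' g + l2inner f g' = ∫ t, D t := (integral_add hD1 hD2).symm
  rw [hDzero] at this
  linarith

-- ### helper lemmas part 2


variable {w h : ℝ → En n}

lemma l2norm_nonneg (f : ℝ → En n) : 0 ≤ l2norm f := ENNReal.toReal_nonneg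

lemma h1norm_nonneg (f f' : ℝ → En n) : 0 ≤ h1norm f f' := Real.sqrt_nonneg _

lemma l2norm_le_h1norm (f f' : ℝ → En n) : l2norm f ≤ h1norm f f' :=
  calc l2norm f = Real.sqrt ((l2norm f)^2) := (Real.sqrt_sq (l2norm_nonneg f)).symm
    _ ≤ h1norm f f' := Real.sqrt_le_sqrt (by nlinarith [sq_nonneg (l2norm f')])

lemma l2norm_deriv_le_h1norm (f f' : ℝ → En n) : l2norm f' ≤ h1norm f f' :=
  calc l2norm f' = Real.sqrt ((l2norm f')^2) := (Real.sqrt_sq (l2norm_nonneg f')).symm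
    _ ≤ h1norm f f' := Real.sqrt_le_sqrt (by nlinarith [sq_nonneg (l2norm f)])

lemma l2inner_eq (hf : memL2 f) (hg : memL2 g) :
    l2inner f g = (inner ℝ (hf.toLp f) (hg.toLp g) : ℝ) := by
  rw [MeasureTheory.L2.inner_def]
  refine (integral_congr_ae ?_).symm
  filter_upwards [hf.coeFn_toLp, hg.coeFn_toLp] with x h1 h2
  rw [h1, h2]

lemma l2norm_eq (hf : memL2 f) : l2norm f = ‖hf.toLp f‖ := by
  exact (Lp.norm_toLp f hf).symm

lemma abs_l2inner_le (hf : memL2 f) (hg : memL2 g) :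
    |l2inner f g| ≤ l2norm f * l2norm g := by
  rw [l2inner_eq hf hg, l2norm_eq hf, l2norm_eq hg]
  exact abs_real_inner_le_norm _ _

lemma l2inner_add_left (hf : memL2 f) (hg : memL2 g) (hh : memL2 h) :
    l2inner (fun ξ => f ξ + g ξ) h = l2inner f h + l2inner g h := by
  unfold l2inner
  rw [← integral_add (memL2.integrable_inner' hf hh) (memL2.integrable_inner' hg hh)]
  congr 1; ext ξ; exact inner_add_left _ _ _

lemma l2inner_sub_right (hf : memL2 f) (hg : memL2 g) (hh : memL2 h) :
    l2inner f (fun ξ => g ξ - h ξ) = l2inner f g - l2inner f h := by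
  unfold l2inner
  rw [← integral_sub (memL2.integrable_inner' hf hg) (memL2.integrable_inner' hf hh)]
  congr 1; ext ξ; exact inner_sub_right _ _ _

lemma memL2.add' (hf : memL2 f) (hg : memL2 g) : memL2 (fun ξ => f ξ + g ξ) := MemLp.add hf hg
lemma memL2.sub' (hf : memL2 f) (hg : memL2 g) : memL2 (fun ξ => f ξ - g ξ) := MemLp.sub hf hg

lemma l2norm_add_le (hf : memL2 f) (hg : memL2 g) :
    l2norm (fun ξ => f ξ + g ξ) ≤ l2norm f + l2norm g := by
  unfold l2norm
  rw [← ENNReal.toReal_add hf.eLpNorm_ne_top hg.eLpNorm_ne_top]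
  refine ENNReal.toReal_mono (by simp [hf.eLpNorm_ne_top, hg.eLpNorm_ne_top]) ?_
  exact eLpNorm_add_le hf.aestronglyMeasurable hg.aestronglyMeasurable one_le_two

lemma l2norm_le_mul (hw : memL2 w) {d : ℝ → En n} {C : ℝ} (hC : 0 ≤ C)
    (hm : AEStronglyMeasurable d volume) (hbd : ∀ ξ, ‖d ξ‖ ≤ C * ‖w ξ‖) :
    l2norm d ≤ C * l2norm w := by
  have h1 : eLpNorm d 2 volume ≤ C.toNNReal • eLpNorm w 2 volume := by
    refine eLpNorm_le_nnreal_smul_eLpNorm_of_ae_le_mul (ae_of_all _ fun ξ => ?_) 2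
    rw [← NNReal.coe_le_coe]
    push_cast
    rw [Real.coe_toNNReal C hC]
    exact hbd ξ
  unfold l2norm
  have h2 := ENNReal.toReal_mono (by
      simp only [ENNReal.smul_def, smul_eq_mul]
      exact ENNReal.mul_ne_top (by simp) hw.eLpNorm_ne_top) h1
  rw [ENNReal.smul_def, smul_eq_mul, ENNReal.toReal_mul] at h2
  simpa [sup_eq_left.mpr hC] using h2

lemma memH1.sub' {f f' g g' : ℝ → En n} (hf : memH1 f f') (hg : memH1 g g') :
    memH1 (fun ξ => f ξ - g ξ) (fun ξ => f' ξ - g' ξ) := by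
  refine ⟨⟨hf.1.1.sub hg.1.1, fun x y => ?_⟩, hf.2.1.sub' hg.2.1, hf.2.2.sub' hg.2.2⟩
  have hfi : IntervalIntegrable f' volume x y := by
    rw [intervalIntegrable_iff]
    exact (hf.1.1.integrableOn_isCompact isCompact_uIcc).mono_set Set.Ioc_subset_Icc_self
  have hgi : IntervalIntegrable g' volume x y := by
    rw [intervalIntegrable_iff]
    exact (hg.1.1.integrableOn_isCompact isCompact_uIcc).mono_set Set.Ioc_subset_Icc_self
  rw [intervalIntegral.integral_sub hfi hgi, ← hf.1.2 x y, ← hg.1.2 x y]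
  simp only []
  abel

lemma rpow_lip {θ : ℝ} (hθ : θ ∈ ({-1, -1/2, 1} : Set ℝ)) {a c : ℝ} (ha : 1 ≤ a) (hc : 1 ≤ c) :
    |a ^ θ - c ^ θ| ≤ |a - c| := by
  have ha0 : (0:ℝ) < a := by linarith
  have hc0 : (0:ℝ) < c := by linarith
  simp only [Set.mem_insert_iff, Set.mem_singleton_iff] at hθ
  rcases hθ with h | h | h
  · subst h
    rw [show ((-1:ℝ)) = ((-1 : ℤ) : ℝ) by norm_num, Real.rpow_intCast, Real.rpow_intCast]
    simp only [zpow_neg, zpow_one]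
    have key : a⁻¹ - c⁻¹ = (c - a) / (a * c) := by field_simp
    rw [key, abs_div, abs_sub_comm]
    have h1 : (1:ℝ) ≤ |a * c| := by
      rw [abs_of_pos (by positivity)]; nlinarith
    exact div_le_self (abs_nonneg _) h1
  · subst h
    set s := Real.sqrt a with hs
    set t := Real.sqrt c with ht
    have hs1 : 1 ≤ s := by rw [hs, show (1:ℝ) = Real.sqrt 1 by simp]; exact Real.sqrt_le_sqrt ha
    have ht1 : 1 ≤ t := by rw [ht, show (1:ℝ) = Real.sqrt 1 by simp]; exact Real.sqrt_le_sqrt hc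
    have hsa : s ^ 2 = a := Real.sq_sqrt ha0.le
    have htc : t ^ 2 = c := Real.sq_sqrt hc0.le
    have hra : a ^ (-1/2 : ℝ) = s⁻¹ := by
      rw [show (-1/2 : ℝ) = -(1/2) by ring, Real.rpow_neg ha0.le, ← Real.sqrt_eq_rpow]
    have hrc : c ^ (-1/2 : ℝ) = t⁻¹ := by
      rw [show (-1/2 : ℝ) = -(1/2) by ring, Real.rpow_neg hc0.le, ← Real.sqrt_eq_rpow]
    rw [hra, hrc]
    have hs0 : (0:ℝ) < s := by linarith
    have ht0 : (0:ℝ) < t := by linarith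
    have key : s⁻¹ - t⁻¹ = (t - s) / (s * t) := by field_simp
    have hac : a - c = (s - t) * (s + t) := by nlinarith
    have hst1 : (1:ℝ) ≤ |s * t| := by rw [abs_of_pos (by positivity)]; nlinarith
    have h2 : |t - s| ≤ |a - c| := by
      calc |t - s| = |s - t| := abs_sub_comm _ _
        _ ≤ |s - t| * (s + t) := le_mul_of_one_le_right (abs_nonneg _) (by linarith)
        _ = |s - t| * |s + t| := by rw [abs_of_pos (show (0:ℝ) < s + t by linarith)]
        _ = |(s - t) * (s + t)| := (abs_mul _ _).symm
        _ = |a - c| := by rw [← hac]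
    calc |s⁻¹ - t⁻¹| = |t - s| / |s * t| := by rw [key, abs_div]
      _ ≤ |t - s| := div_le_self (abs_nonneg _) hst1
      _ ≤ |a - c| := h2
  · subst h
    rw [Real.rpow_one, Real.rpow_one]

lemma rpow_near_one {θ : ℝ} (hθ : θ ∈ ({-1, -1/2, 1} : Set ℝ)) {a m : ℝ} (ha : 1 ≤ a)
    (ham : a ≤ 1 + m) : |a ^ θ - 1| ≤ m := by
  have := rpow_lip hθ ha (le_refl (1:ℝ))
  rw [Real.one_rpow] at this
  refine this.trans ?_
  rw [abs_of_nonneg (by linarith)]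
  linarith

lemma memL2_comp_g {g : En n → En n} (hgc : Continuous g) {Kg : ℝ} (hKg0 : 0 ≤ Kg)
    (hlip : ∀ a b : En n, ‖g a - g b‖ ≤ Kg * ‖a - b‖) {Φ₀ u w : ℝ → En n}
    (hΦ₀c : Continuous Φ₀) (huc : Continuous u)
    (hgΦ₀ : memL2 (fun ξ => g (Φ₀ ξ))) (hw : memL2 w) (hwdef : ∀ ξ, u ξ = Φ₀ ξ + w ξ) :
    memL2 (fun ξ => g (u ξ)) ∧
      l2norm (fun ξ => g (u ξ)) ≤ l2norm (fun ξ => g (Φ₀ ξ)) + Kg * l2norm w := by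
  have hbd : ∀ ξ, ‖g (u ξ) - g (Φ₀ ξ)‖ ≤ Kg * ‖w ξ‖ := by
    intro ξ
    have h1 := hlip (u ξ) (Φ₀ ξ)
    have h2 : u ξ - Φ₀ ξ = w ξ := by rw [hwdef ξ]; abel
    rwa [h2] at h1
  have hd : memL2 (fun ξ => g (u ξ) - g (Φ₀ ξ)) := by
    refine MemLp.of_le_mul (c := Kg) hw
      (by exact ((hgc.comp huc).sub (hgc.comp hΦ₀c)).aestronglyMeasurable) ?_
    exact ae_of_all _ hbd
  have heq : (fun ξ => g (u ξ)) = fun ξ => g (Φ₀ ξ) + (g (u ξ) - g (Φ₀ ξ)) := by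
    funext ξ; abel
  constructor
  · rw [heq]; exact hgΦ₀.add' hd
  · rw [heq]
    refine (l2norm_add_le hgΦ₀ hd).trans ?_
    have := l2norm_le_mul (d := fun ξ => g (u ξ) - g (Φ₀ ξ)) hw hKg0
      (by exact ((hgc.comp huc).sub (hgc.comp hΦ₀c)).aestronglyMeasurable) hbd
    linarith



lemma abs_sub_le_abs_add_abs (x y : ℝ) : |x - y| ≤ |x| + |y| := by
  rw [sub_eq_add_neg]
  exact (abs_add_le x (-y)).trans_eq (by rw [abs_neg])

lemma bdiff_bound {lA lB hA hB JA JB IA IB Lh' Ll' Kip Kg CJ CI X Y C0 : ℝ}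
    (hlA : 1/4 ≤ lA) (hlB : 1/4 ≤ lB) (hhB : |hB| ≤ Kip + 1) (hKip : 0 < Kip)
    (hd1 : |hA - hB| ≤ Lh' * |JA - JB|) (hd2 : |lA - lB| ≤ Ll' * |IA - IB|)
    (hJ : |JA - JB| ≤ Kg * X + CJ * Y) (hI : |IA - IB| ≤ X + CI * Y)
    (hLh : 1 ≤ Lh') (hLl : 1 ≤ Ll') (hKg : 0 < Kg) (hCJ : 0 < CJ) (hCI : 1 ≤ CI)
    (hX : 0 ≤ X) (hY : 0 ≤ Y)
    (hC0 : C0 = 4 * Lh' * (Kg + CJ) + 16 * (Kip + 1) * Ll' * (1 + CI)) :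
    |-lA⁻¹ * hA - -lB⁻¹ * hB| ≤ C0 * (X + Y) := by
  have hlA0 : (0:ℝ) < lA := by linarith
  have hlB0 : (0:ℝ) < lB := by linarith
  have hinvA : lA⁻¹ ≤ 4 := by
    rw [show (4:ℝ) = (1/4:ℝ)⁻¹ by norm_num]
    exact inv_anti₀ (by norm_num) hlA
  have hinvA0 : 0 ≤ lA⁻¹ := inv_nonneg.mpr hlA0.le
  have hid : |lA⁻¹ - lB⁻¹| ≤ 16 * |lA - lB| := by
    have k : lA⁻¹ - lB⁻¹ = (lB - lA) / (lA * lB) := by field_simp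
    rw [k, abs_div]
    rw [div_le_iff₀ (by positivity : (0:ℝ) < |lA * lB|)]
    have h116 : 1/16 ≤ |lA * lB| := by
      rw [abs_of_pos (by positivity)]; nlinarith
    have hcomm : |lB - lA| = |lA - lB| := abs_sub_comm _ _
    nlinarith [abs_nonneg (lA - lB)]
  have key : -lA⁻¹ * hA - -lB⁻¹ * hB = (-(lA⁻¹ * (hA - hB))) - ((lA⁻¹ - lB⁻¹) * hB) := by
    ring
  have step : |-lA⁻¹ * hA - -lB⁻¹ * hB| ≤ |lA⁻¹ * (hA - hB)| + |(lA⁻¹ - lB⁻¹) * hB| := by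
    rw [key]
    exact (abs_sub_le_abs_add_abs _ _).trans_eq (by rw [abs_neg])
  have t1 : |lA⁻¹ * (hA - hB)| ≤ 4 * (Lh' * (Kg * X + CJ * Y)) := by
    rw [abs_mul]
    have hAB : |hA - hB| ≤ Lh' * (Kg * X + CJ * Y) :=
      hd1.trans (mul_le_mul_of_nonneg_left hJ (by linarith))
    refine mul_le_mul ?_ hAB (abs_nonneg _) (by norm_num)
    rwa [abs_of_nonneg hinvA0]
  have t2 : |(lA⁻¹ - lB⁻¹) * hB| ≤ 16 * (Ll' * (X + CI * Y)) * (Kip + 1) := by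
    rw [abs_mul]
    have hlAB : |lA⁻¹ - lB⁻¹| ≤ 16 * (Ll' * (X + CI * Y)) := by
      refine hid.trans ?_
      have h3 : |lA - lB| ≤ Ll' * (X + CI * Y) :=
        hd2.trans (mul_le_mul_of_nonneg_left hI (by linarith))
      linarith
    refine mul_le_mul hlAB hhB (abs_nonneg _) ?_
    positivity
  have cX : 0 ≤ (4*Lh'*CJ + 16*(Kip+1)*Ll'*CI) * X := by positivity
  have cY : 0 ≤ (4*Lh'*Kg + 16*(Kip+1)*Ll') * Y := by positivity
  rw [hC0]
  nlinarith [cX, cY]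


lemma kappa_diff_bound {ρ σ bA bB M D : ℝ} (hρ : 0 < ρ) (hbA : |bA| ≤ M) (hbB : |bB| ≤ M)
    (hd : |bA - bB| ≤ D) (hD0 : 0 ≤ D) :
    |kappa ρ σ bA - kappa ρ σ bB| ≤ σ^2 * (M / ρ) * D := by
  have hM0 : 0 ≤ M := le_trans (abs_nonneg bA) hbA
  have key : kappa ρ σ bA - kappa ρ σ bB = σ^2 * ((bA - bB) * (bA + bB)) / (2*ρ) := by
    unfold kappa; ring
  rw [key, abs_div, abs_mul, abs_mul]
  rw [abs_of_nonneg (sq_nonneg σ), abs_of_pos (show (0:ℝ) < 2*ρ by linarith)]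
  rw [div_le_iff₀ (by linarith : (0:ℝ) < 2*ρ)]
  have h1 : |bA + bB| ≤ 2*M := (abs_add_le _ _).trans (by linarith)
  have h2 : |bA - bB| * |bA + bB| ≤ D * (2*M) :=
    mul_le_mul hd h1 (abs_nonneg _) hD0
  calc σ^2 * (|bA - bB| * |bA + bB|) ≤ σ^2 * (D * (2*M)) := by nlinarith [sq_nonneg σ]
    _ = σ^2 * (M/ρ) * D * (2*ρ) := by field_simp


end Auxiliary

set_option maxHeartbeats 2000000 in
/-- bounds and Lipschitz estimates for `ν_σ^{(θ)} = κ_σ^θ − 1`,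
`θ ∈ {−1, −1/2, 1}`. -/
theorem statement7 {n : ℕ} (hn : 1 ≤ n) (ρ : ℝ) (hρ : 0 < ρ)
    (g : En n → En n)
    (hg : ContDiff ℝ 1 g) (Kg : ℝ) (hKg : 0 < Kg)
    (hDg : ∀ u : En n, ‖fderiv ℝ g u‖ ≤ Kg)
    (hDgLip : ∀ uA uB : En n, ‖fderiv ℝ g uA - fderiv ℝ g uB‖ ≤ Kg * ‖uA - uB‖)
    (Kip : ℝ) (hKip : 0 < Kip) (χlow χhigh : ℝ → ℝ)
    (hχlow_smooth : ContDiff ℝ (⊤ : ℕ∞) χlow) (hχlow_mono : Monotone χlow)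
    (hχlow_lb : ∀ θ : ℝ, (1/4:ℝ) ≤ χlow θ)
    (hχlow_eq1 : ∀ θ : ℝ, θ ≤ 1/4 → χlow θ = 1/4)
    (hχlow_eq2 : ∀ θ : ℝ, 1/2 ≤ θ → χlow θ = θ)
    (hχlow_lip : ∃ L : ℝ, ∀ x y : ℝ, |χlow x - χlow y| ≤ L * |x - y|)
    (hχhigh_smooth : ContDiff ℝ (⊤ : ℕ∞) χhigh) (hχhigh_mono : Monotone χhigh)
    (hχhigh_bd : ∀ θ : ℝ, |χhigh θ| ≤ Kip + 1)
    (hχhigh_eq1 : ∀ θ : ℝ, |θ| ≤ Kip → χhigh θ = θ)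
    (hχhigh_eq2 : ∀ θ : ℝ, Kip + 1 ≤ |θ| → χhigh θ = Real.sign θ * (Kip + 1))
    (hχhigh_lip : ∃ L : ℝ, ∀ x y : ℝ, |χhigh x - χhigh y| ≤ L * |x - y|)
    (Φ₀ : ℝ → En n) (hΦ₀C1 : ContDiff ℝ 1 Φ₀)
    (hΦ₀bdd : ∃ B : ℝ, ∀ ξ, ‖Φ₀ ξ‖ ≤ B)
    (hΦ₀' : memL2 (deriv Φ₀))
    (hgΦ₀ : memL2 (fun ξ => g (Φ₀ ξ)))
    (θ : ℝ) (hθ : θ ∈ ({-1, -1/2, 1} : Set ℝ)) :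
    ∃ Kν > (0:ℝ), ∃ K > (0:ℝ),
      ∀ p p' : ℝ → En n, memH1 p p' → h1norm p p' ≤ 1 →
      ∀ σ : ℝ, 0 ≤ σ → σ ≤ 1 →
        (∀ v v' ψ ψ' : ℝ → En n, memH1 v v' → memH1 ψ ψ' →
          |(kappa ρ σ (bfun χlow χhigh g (fun ξ => Φ₀ ξ + p ξ + v ξ)
              (fun ξ => deriv Φ₀ ξ + p' ξ + v' ξ) ψ)) ^ θ - 1| ≤ σ^2 * Kν) ∧
        (∀ vA vA' vB vB' ψA ψA' ψB ψB' : ℝ → En n,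
          memH1 vA vA' → memH1 vB vB' → memH1 ψA ψA' → memH1 ψB ψB' →
          |(kappa ρ σ (bfun χlow χhigh g (fun ξ => Φ₀ ξ + p ξ + vA ξ)
              (fun ξ => deriv Φ₀ ξ + p' ξ + vA' ξ) ψA)) ^ θ
            - (kappa ρ σ (bfun χlow χhigh g (fun ξ => Φ₀ ξ + p ξ + vB ξ)
              (fun ξ => deriv Φ₀ ξ + p' ξ + vB' ξ) ψB)) ^ θ| ≤
            K * σ^2 * l2norm (fun ξ => vA ξ - vB ξ) * h1norm ψA ψA'
            + K * σ^2 * (1 + l2norm vB) *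
                h1norm (fun ξ => ψA ξ - ψB ξ) (fun ξ => ψA' ξ - ψB' ξ)) := by
  obtain ⟨Ll, hLl⟩ := hχlow_lip
  obtain ⟨Lh, hLh⟩ := hχhigh_lip
  obtain ⟨Ll', hLl'def⟩ : ∃ x : ℝ, x = |Ll| + 1 := ⟨_, rfl⟩
  obtain ⟨Lh', hLh'def⟩ : ∃ x : ℝ, x = |Lh| + 1 := ⟨_, rfl⟩
  have hLl'1 : 1 ≤ Ll' := by rw [hLl'def]; linarith [abs_nonneg Ll]
  have hLh'1 : 1 ≤ Lh' := by rw [hLh'def]; linarith [abs_nonneg Lh]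
  have hLl2 : ∀ x y, |χlow x - χlow y| ≤ Ll' * |x - y| := fun x y =>
    (hLl x y).trans (mul_le_mul_of_nonneg_right
      ((le_abs_self Ll).trans (by rw [hLl'def]; linarith)) (abs_nonneg _))
  have hLh2 : ∀ x y, |χhigh x - χhigh y| ≤ Lh' * |x - y| := fun x y =>
    (hLh x y).trans (mul_le_mul_of_nonneg_right
      ((le_abs_self Lh).trans (by rw [hLh'def]; linarith)) (abs_nonneg _))
  have hglip : ∀ a b : En n, ‖g a - g b‖ ≤ Kg * ‖a - b‖ := fun a b =>
    Convex.norm_image_sub_le_of_norm_fderiv_le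
      (fun x _ => (hg.differentiable one_ne_zero).differentiableAt)
      (fun x _ => hDg x) convex_univ (Set.mem_univ b) (Set.mem_univ a)
  obtain ⟨M, hMdef⟩ : ∃ x : ℝ, x = 4 * (Kip + 1) := ⟨_, rfl⟩
  have hM0 : 0 < M := by rw [hMdef]; linarith
  obtain ⟨CI, hCIdef⟩ : ∃ x : ℝ, x = l2norm (deriv Φ₀) + 1 := ⟨_, rfl⟩
  have hCI1 : 1 ≤ CI := by
    have := l2norm_nonneg (deriv Φ₀); rw [hCIdef]; linarith
  obtain ⟨CJ, hCJdef⟩ : ∃ x : ℝ, x = l2norm (fun ξ => g (Φ₀ ξ)) + Kg := ⟨_, rfl⟩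
  have hCJ0 : 0 < CJ := by
    have := l2norm_nonneg (fun ξ => g (Φ₀ ξ)); rw [hCJdef]; linarith
  obtain ⟨C0, hC0def⟩ : ∃ x : ℝ, x = 4 * Lh' * (Kg + CJ) + 16 * (Kip + 1) * Ll' * (1 + CI) := ⟨_, rfl⟩
  have hC0pos : 0 < C0 := by
    have h1 : 0 < 4 * Lh' * (Kg + CJ) :=
      mul_pos (mul_pos (by norm_num) (by linarith)) (by linarith)
    have h2 : 0 < 16 * (Kip + 1) * Ll' * (1 + CI) :=
      mul_pos (mul_pos (mul_pos (by norm_num) (by linarith)) (by linarith)) (by linarith)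
    rw [hC0def]; linarith
  obtain ⟨Kν, hKνdef⟩ : ∃ x : ℝ, x = M ^ 2 / (2 * ρ) + 1 := ⟨_, rfl⟩
  obtain ⟨K, hKdef⟩ : ∃ x : ℝ, x = M / ρ * C0 + 1 := ⟨_, rfl⟩
  have hKνpos : 0 < Kν := by have h : 0 < M^2/(2*ρ) := by positivity
                             rw [hKνdef]; linarith
  have hKpos : 0 < K := by have h : 0 < M / ρ * C0 := by positivity
                           rw [hKdef]; linarith
  refine ⟨Kν, hKνpos, K, hKpos, ?_⟩
  intro p p' hp hpnorm σ hσ0 hσ1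
  -- uniform bound on bfun
  have hbabs : ∀ (I J : ℝ), |-(χlow I)⁻¹ * χhigh J| ≤ M := by
    intro I J
    have h1 : (1/4:ℝ) ≤ χlow I := hχlow_lb I
    have h2 : (χlow I)⁻¹ ≤ 4 := by
      rw [show (4:ℝ) = (1/4:ℝ)⁻¹ by norm_num]
      exact inv_anti₀ (by norm_num) h1
    have h3 : 0 ≤ (χlow I)⁻¹ := inv_nonneg.mpr (by linarith)
    calc |-(χlow I)⁻¹ * χhigh J| = |(χlow I)⁻¹| * |χhigh J| := by
          rw [show -(χlow I)⁻¹ * χhigh J = -((χlow I)⁻¹ * χhigh J) by ring, abs_neg, abs_mul]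
      _ ≤ 4 * (Kip + 1) := by
          refine mul_le_mul ?_ (hχhigh_bd J) (abs_nonneg _) (by norm_num)
          rwa [abs_of_nonneg h3]
      _ = M := hMdef.symm
  have hκ1 : ∀ b : ℝ, 1 ≤ kappa ρ σ b := by
    intro b
    have : 0 ≤ σ^2 * b^2 / (2*ρ) := by positivity
    simp only [kappa]; linarith
  constructor
  · -- part 1
    intro v v' ψ ψ' hv hψ
    have hb : |bfun χlow χhigh g (fun ξ => Φ₀ ξ + p ξ + v ξ)
        (fun ξ => deriv Φ₀ ξ + p' ξ + v' ξ) ψ| ≤ M := by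
      unfold bfun; exact hbabs _ _
    obtain ⟨b, hbdef⟩ : ∃ x : ℝ, x = bfun χlow χhigh g (fun ξ => Φ₀ ξ + p ξ + v ξ)
        (fun ξ => deriv Φ₀ ξ + p' ξ + v' ξ) ψ := ⟨_, rfl⟩
    rw [← hbdef] at hb ⊢
    have hb2 : b^2 ≤ M^2 := by nlinarith [abs_nonneg b, neg_abs_le b, le_abs_self b]
    have hub : kappa ρ σ b ≤ 1 + σ^2 * (M^2 / (2*ρ)) := by
      simp only [kappa]
      have : σ^2 * b^2 / (2*ρ) ≤ σ^2 * (M^2/(2*ρ)) := by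
        rw [div_le_iff₀ (by linarith : (0:ℝ) < 2*ρ)]
        have hσ2 : 0 ≤ σ^2 := sq_nonneg σ
        calc σ^2 * b^2 ≤ σ^2 * M^2 := by nlinarith
          _ = σ^2 * (M^2/(2*ρ)) * (2*ρ) := by field_simp
      linarith
    have := rpow_near_one hθ (hκ1 b) hub
    refine this.trans ?_
    have hσ2 : 0 ≤ σ^2 := sq_nonneg σ
    have h1 : 0 < M^2/(2*ρ) := by positivity
    rw [hKνdef]
    nlinarith
  · -- part 2
    intro vA vA' vB vB' ψA ψA' ψB ψB' hvA hvB hψA hψB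
    have hΦc : Continuous Φ₀ := hΦ₀C1.continuous
    have hgcont : Continuous g := hg.continuous
    have hpc : Continuous p := hp.1.continuous
    have hvAc : Continuous vA := hvA.1.continuous
    have hvBc : Continuous vB := hvB.1.continuous
    have huAc : Continuous (fun ξ => Φ₀ ξ + p ξ + vA ξ) := (hΦc.add hpc).add hvAc
    have huBc : Continuous (fun ξ => Φ₀ ξ + p ξ + vB ξ) := (hΦc.add hpc).add hvBc
    have hwL2 : memL2 (fun ξ => deriv Φ₀ ξ + p' ξ) := hΦ₀'.add' hp.2.2
    have hduB : memL2 (fun ξ => deriv Φ₀ ξ + p' ξ + vB' ξ) := hwL2.add' hvB.2.2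
    have hδv : memL2 (fun ξ => vA ξ - vB ξ) := hvA.2.1.sub' hvB.2.1
    have hδψ : memL2 (fun ξ => ψA ξ - ψB ξ) := hψA.2.1.sub' hψB.2.1
    have hδψ' : memL2 (fun ξ => ψA' ξ - ψB' ξ) := hψA.2.2.sub' hψB.2.2
    have hpvA : memL2 (fun ξ => p ξ + vA ξ) := hp.2.1.add' hvA.2.1
    have hpvB : memL2 (fun ξ => p ξ + vB ξ) := hp.2.1.add' hvB.2.1
    have hgAfull := memL2_comp_g (u := fun ξ => Φ₀ ξ + p ξ + vA ξ) hgcont hKg.le hglip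
      hΦc huAc hgΦ₀ hpvA (fun ξ => add_assoc _ _ _)
    have hgBfull := memL2_comp_g (u := fun ξ => Φ₀ ξ + p ξ + vB ξ) hgcont hKg.le hglip
      hΦc huBc hgΦ₀ hpvB (fun ξ => add_assoc _ _ _)
    have hgAL2 : memL2 (fun ξ => g (Φ₀ ξ + p ξ + vA ξ)) := hgAfull.1
    have hgBL2 : memL2 (fun ξ => g (Φ₀ ξ + p ξ + vB ξ)) := hgBfull.1
    have hdgL2 : memL2 (fun ξ => g (Φ₀ ξ + p ξ + vA ξ) - g (Φ₀ ξ + p ξ + vB ξ)) :=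
      hgAL2.sub' hgBL2
    have hp1 : l2norm p ≤ 1 := (l2norm_le_h1norm p p').trans hpnorm
    have hp'1 : l2norm p' ≤ 1 := (l2norm_deriv_le_h1norm p p').trans hpnorm
    have hgBnorm : l2norm (fun ξ => g (Φ₀ ξ + p ξ + vB ξ)) ≤ CJ * (1 + l2norm vB) := by
      have h1 : l2norm (fun ξ => g (Φ₀ ξ + p ξ + vB ξ))
          ≤ l2norm (fun ξ => g (Φ₀ ξ)) + Kg * l2norm (fun ξ => p ξ + vB ξ) := hgBfull.2
      have h2 : l2norm (fun ξ => p ξ + vB ξ) ≤ l2norm p + l2norm vB :=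
        l2norm_add_le hp.2.1 hvB.2.1
      have h3 : l2norm (fun ξ => p ξ + vB ξ) ≤ 1 + l2norm vB := by linarith
      rw [hCJdef]
      nlinarith [mul_le_mul_of_nonneg_left h3 hKg.le,
        mul_nonneg (l2norm_nonneg (fun ξ => g (Φ₀ ξ))) (l2norm_nonneg vB)]
    have hdgn : l2norm (fun ξ => g (Φ₀ ξ + p ξ + vA ξ) - g (Φ₀ ξ + p ξ + vB ξ))
        ≤ Kg * l2norm (fun ξ => vA ξ - vB ξ) := by
      refine l2norm_le_mul hδv hKg.le
        (by exact ((hgcont.comp huAc).sub (hgcont.comp huBc)).aestronglyMeasurable)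
        (fun ξ => ?_)
      have h1 := hglip (Φ₀ ξ + p ξ + vA ξ) (Φ₀ ξ + p ξ + vB ξ)
      have h2 : Φ₀ ξ + p ξ + vA ξ - (Φ₀ ξ + p ξ + vB ξ) = vA ξ - vB ξ := by abel
      rw [h2] at h1
      exact h1
    obtain ⟨X, hXdef⟩ : ∃ x : ℝ, x = l2norm (fun ξ => vA ξ - vB ξ) * h1norm ψA ψA' := ⟨_, rfl⟩
    obtain ⟨Y, hYdef⟩ : ∃ x : ℝ, x = (1 + l2norm vB) *
        h1norm (fun ξ => ψA ξ - ψB ξ) (fun ξ => ψA' ξ - ψB' ξ) := ⟨_, rfl⟩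
    have hX0 : 0 ≤ X := by
      rw [hXdef]; exact mul_nonneg (l2norm_nonneg _) (h1norm_nonneg _ _)
    have hY0 : 0 ≤ Y := by
      rw [hYdef]
      exact mul_nonneg (by linarith [l2norm_nonneg vB]) (h1norm_nonneg _ _)
    -- J estimate
    have habsJ : |l2inner (fun ξ => g (Φ₀ ξ + p ξ + vA ξ)) ψA
        - l2inner (fun ξ => g (Φ₀ ξ + p ξ + vB ξ)) ψB| ≤ Kg * X + CJ * Y := by
      have e1 : l2inner (fun ξ => g (Φ₀ ξ + p ξ + vA ξ)) ψA
          = l2inner (fun ξ => g (Φ₀ ξ + p ξ + vB ξ)) ψA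
            + l2inner (fun ξ => g (Φ₀ ξ + p ξ + vA ξ) - g (Φ₀ ξ + p ξ + vB ξ)) ψA := by
        rw [show (fun ξ => g (Φ₀ ξ + p ξ + vA ξ))
            = (fun ξ => g (Φ₀ ξ + p ξ + vB ξ)
                + (g (Φ₀ ξ + p ξ + vA ξ) - g (Φ₀ ξ + p ξ + vB ξ)))
          from funext fun ξ => by abel]
        exact l2inner_add_left hgBL2 hdgL2 hψA.2.1
      have e2 : l2inner (fun ξ => g (Φ₀ ξ + p ξ + vB ξ)) ψA
            - l2inner (fun ξ => g (Φ₀ ξ + p ξ + vB ξ)) ψB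
          = l2inner (fun ξ => g (Φ₀ ξ + p ξ + vB ξ)) (fun ξ => ψA ξ - ψB ξ) :=
        (l2inner_sub_right hgBL2 hψA.2.1 hψB.2.1).symm
      have b1 : |l2inner (fun ξ => g (Φ₀ ξ + p ξ + vA ξ) - g (Φ₀ ξ + p ξ + vB ξ)) ψA|
          ≤ Kg * X := by
        refine (abs_l2inner_le hdgL2 hψA.2.1).trans ?_
        rw [hXdef]
        nlinarith [l2norm_le_h1norm ψA ψA', hdgn,
          l2norm_nonneg (fun ξ => g (Φ₀ ξ + p ξ + vA ξ) - g (Φ₀ ξ + p ξ + vB ξ)),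
          l2norm_nonneg (fun ξ => vA ξ - vB ξ), h1norm_nonneg ψA ψA',
          l2norm_nonneg ψA, hKg.le]
      have b2 : |l2inner (fun ξ => g (Φ₀ ξ + p ξ + vB ξ)) (fun ξ => ψA ξ - ψB ξ)|
          ≤ CJ * Y := by
        refine (abs_l2inner_le hgBL2 hδψ).trans ?_
        rw [hYdef]
        nlinarith [l2norm_le_h1norm (fun ξ => ψA ξ - ψB ξ) (fun ξ => ψA' ξ - ψB' ξ),
          hgBnorm, l2norm_nonneg (fun ξ => g (Φ₀ ξ + p ξ + vB ξ)),
          l2norm_nonneg (fun ξ => ψA ξ - ψB ξ),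
          h1norm_nonneg (fun ξ => ψA ξ - ψB ξ) (fun ξ => ψA' ξ - ψB' ξ),
          hCJ0.le, l2norm_nonneg vB]
      have split : l2inner (fun ξ => g (Φ₀ ξ + p ξ + vA ξ)) ψA
            - l2inner (fun ξ => g (Φ₀ ξ + p ξ + vB ξ)) ψB
          = l2inner (fun ξ => g (Φ₀ ξ + p ξ + vA ξ) - g (Φ₀ ξ + p ξ + vB ξ)) ψA
            + l2inner (fun ξ => g (Φ₀ ξ + p ξ + vB ξ)) (fun ξ => ψA ξ - ψB ξ) := by
        rw [← e2]; linarith [e1]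
      rw [split]
      exact (abs_add_le _ _).trans (by linarith)
    -- I estimate
    have habsI : |l2inner (fun ξ => deriv Φ₀ ξ + p' ξ + vA' ξ) ψA
        - l2inner (fun ξ => deriv Φ₀ ξ + p' ξ + vB' ξ) ψB| ≤ X + CI * Y := by
      have e1 : l2inner (fun ξ => deriv Φ₀ ξ + p' ξ + vA' ξ) ψA
          = l2inner (fun ξ => deriv Φ₀ ξ + p' ξ + vB' ξ) ψA
            + l2inner (fun ξ => vA' ξ - vB' ξ) ψA := by
        rw [show (fun ξ => deriv Φ₀ ξ + p' ξ + vA' ξ)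
            = (fun ξ => (deriv Φ₀ ξ + p' ξ + vB' ξ) + (vA' ξ - vB' ξ))
          from funext fun ξ => by abel]
        exact l2inner_add_left hduB (hvA.2.2.sub' hvB.2.2) hψA.2.1
      have e2 : l2inner (fun ξ => vA' ξ - vB' ξ) ψA
          = - l2inner (fun ξ => vA ξ - vB ξ) ψA' :=
        l2inner_ibp (memH1.sub' hvA hvB) hψA
      have e3 : l2inner (fun ξ => deriv Φ₀ ξ + p' ξ + vB' ξ) ψA
            - l2inner (fun ξ => deriv Φ₀ ξ + p' ξ + vB' ξ) ψB
          = l2inner (fun ξ => deriv Φ₀ ξ + p' ξ + vB' ξ) (fun ξ => ψA ξ - ψB ξ) :=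
        (l2inner_sub_right hduB hψA.2.1 hψB.2.1).symm
      have e4 : l2inner (fun ξ => deriv Φ₀ ξ + p' ξ + vB' ξ) (fun ξ => ψA ξ - ψB ξ)
          = l2inner (fun ξ => deriv Φ₀ ξ + p' ξ) (fun ξ => ψA ξ - ψB ξ)
            + l2inner vB' (fun ξ => ψA ξ - ψB ξ) :=
        l2inner_add_left hwL2 hvB.2.2 hδψ
      have e5 : l2inner vB' (fun ξ => ψA ξ - ψB ξ)
          = - l2inner vB (fun ξ => ψA' ξ - ψB' ξ) :=
        l2inner_ibp hvB (memH1.sub' hψA hψB)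
      have c1 : |l2inner (fun ξ => vA ξ - vB ξ) ψA'| ≤ X := by
        refine (abs_l2inner_le hδv hψA.2.2).trans ?_
        rw [hXdef]
        nlinarith [l2norm_deriv_le_h1norm ψA ψA',
          l2norm_nonneg (fun ξ => vA ξ - vB ξ), l2norm_nonneg ψA']
      have c2 : |l2inner (fun ξ => deriv Φ₀ ξ + p' ξ) (fun ξ => ψA ξ - ψB ξ)|
            + |l2inner vB (fun ξ => ψA' ξ - ψB' ξ)| ≤ CI * Y := by
        have d1 := abs_l2inner_le hwL2 hδψ
        have d2 := abs_l2inner_le hvB.2.1 hδψ'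
        have d3 : l2norm (fun ξ => deriv Φ₀ ξ + p' ξ) ≤ l2norm (deriv Φ₀) + 1 :=
          (l2norm_add_le hΦ₀' hp.2.2).trans (by linarith)
        have t1 : |l2inner (fun ξ => deriv Φ₀ ξ + p' ξ) (fun ξ => ψA ξ - ψB ξ)|
            ≤ (l2norm (deriv Φ₀) + 1) *
              h1norm (fun ξ => ψA ξ - ψB ξ) (fun ξ => ψA' ξ - ψB' ξ) :=
          d1.trans (mul_le_mul d3 (l2norm_le_h1norm _ _) (l2norm_nonneg _)
            (by linarith [l2norm_nonneg (deriv Φ₀)]))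
        have t2 : |l2inner vB (fun ξ => ψA' ξ - ψB' ξ)|
            ≤ l2norm vB * h1norm (fun ξ => ψA ξ - ψB ξ) (fun ξ => ψA' ξ - ψB' ξ) :=
          d2.trans (mul_le_mul_of_nonneg_left (l2norm_deriv_le_h1norm _ _)
            (l2norm_nonneg vB))
        rw [hYdef, hCIdef]
        nlinarith [t1, t2,
          mul_nonneg (mul_nonneg (l2norm_nonneg vB)
            (h1norm_nonneg (fun ξ => ψA ξ - ψB ξ) (fun ξ => ψA' ξ - ψB' ξ)))
            (l2norm_nonneg (deriv Φ₀))]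
      have split : l2inner (fun ξ => deriv Φ₀ ξ + p' ξ + vA' ξ) ψA
            - l2inner (fun ξ => deriv Φ₀ ξ + p' ξ + vB' ξ) ψB
          = - l2inner (fun ξ => vA ξ - vB ξ) ψA'
            + (l2inner (fun ξ => deriv Φ₀ ξ + p' ξ) (fun ξ => ψA ξ - ψB ξ)
              + - l2inner vB (fun ξ => ψA' ξ - ψB' ξ)) := by
        rw [← e2, ← e5, ← e4, ← e3]; linarith [e1]
      rw [split]
      refine (abs_add_le _ _).trans ?_
      have r1 : |-l2inner (fun ξ => vA ξ - vB ξ) ψA'|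
          = |l2inner (fun ξ => vA ξ - vB ξ) ψA'| := abs_neg _
      have r2 : |l2inner (fun ξ => deriv Φ₀ ξ + p' ξ) (fun ξ => ψA ξ - ψB ξ)
            + -l2inner vB (fun ξ => ψA' ξ - ψB' ξ)|
          ≤ |l2inner (fun ξ => deriv Φ₀ ξ + p' ξ) (fun ξ => ψA ξ - ψB ξ)|
            + |l2inner vB (fun ξ => ψA' ξ - ψB' ξ)| :=
        (abs_add_le _ _).trans (by rw [abs_neg])
      linarith
    -- b difference
    have hbd : |bfun χlow χhigh g (fun ξ => Φ₀ ξ + p ξ + vA ξ)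
          (fun ξ => deriv Φ₀ ξ + p' ξ + vA' ξ) ψA
        - bfun χlow χhigh g (fun ξ => Φ₀ ξ + p ξ + vB ξ)
          (fun ξ => deriv Φ₀ ξ + p' ξ + vB' ξ) ψB| ≤ C0 * (X + Y) := by
      unfold bfun
      exact bdiff_bound (hχlow_lb _) (hχlow_lb _) (hχhigh_bd _) hKip
        (hLh2 _ _) (hLl2 _ _) habsJ habsI hLh'1 hLl'1 hKg hCJ0 hCI1 hX0 hY0 hC0def
    have hbA : |bfun χlow χhigh g (fun ξ => Φ₀ ξ + p ξ + vA ξ)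
        (fun ξ => deriv Φ₀ ξ + p' ξ + vA' ξ) ψA| ≤ M := by
      unfold bfun; exact hbabs _ _
    have hbB : |bfun χlow χhigh g (fun ξ => Φ₀ ξ + p ξ + vB ξ)
        (fun ξ => deriv Φ₀ ξ + p' ξ + vB' ξ) ψB| ≤ M := by
      unfold bfun; exact hbabs _ _
    have hκd := kappa_diff_bound (σ := σ) hρ hbA hbB hbd
      (mul_nonneg hC0pos.le (add_nonneg hX0 hY0))
    refine (rpow_lip hθ (hκ1 _) (hκ1 _)).trans ?_
    refine hκd.trans ?_
    rw [hKdef, hXdef, hYdef]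
    nlinarith [mul_nonneg (sq_nonneg σ)
        (mul_nonneg (l2norm_nonneg (fun ξ => vA ξ - vB ξ)) (h1norm_nonneg ψA ψA')),
      mul_nonneg (sq_nonneg σ) (mul_nonneg (by linarith [l2norm_nonneg vB] : (0:ℝ) ≤ 1 + l2norm vB)
        (h1norm_nonneg (fun ξ => ψA ξ - ψB ξ) (fun ξ => ψA' ξ - ψB' ξ)))]
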